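/- arXiv:1801.00150 — 3 statements merged into one kernel-verified Lean document; each statement's English description precedes it below -/
import Mathlib

section
/- Let f be an h-reversible C¹ diffeomorphism of ℝ² with |det Dh| ≡ 1, and let x be a periodic point of f with period n lying on Fix(h) (h x = x). Then |det D(f^[n])(x)| = 1. -/
/-!
Differentiating `g^[n] ∘ f^[n] = id` at the fixed point `x` gives `det D(g^[n]) x · det D(f^[n]) x = 1`,
while differentiating the reversibility relation `h ∘ f^[n] = g^[n] ∘ h` at `x = h x` and using
`|det Dh x| = 1` gives `|det D(f^[n]) x| = |det D(g^[n]) x|`. Hence `|det D(f^[n]) x|² = 1`.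
-/

open Function

section

variable {𝕜 E : Type*} [NontriviallyNormedField 𝕜] [NormedAddCommGroup E] [NormedSpace 𝕜 E]
  {φ ψ h : E → E} {x : E}

theorem det_fderiv_comp (hψ : DifferentiableAt 𝕜 ψ (φ x)) (hφ : DifferentiableAt 𝕜 φ x) :
    (fderiv 𝕜 (ψ ∘ φ) x).det = (fderiv 𝕜 ψ (φ x)).det * (fderiv 𝕜 φ x).det := by
  rw [fderiv_comp x hψ hφ]
  exact LinearMap.det_comp _ _

theorem det_fderiv_mul_det_fderiv_of_leftInverse (hψφ : LeftInverse ψ φ)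
    (hψ : DifferentiableAt 𝕜 ψ (φ x)) (hφ : DifferentiableAt 𝕜 φ x) :
    (fderiv 𝕜 ψ (φ x)).det * (fderiv 𝕜 φ x).det = 1 := by
  rw [← det_fderiv_comp hψ hφ, hψφ.comp_eq_id, fderiv_id]
  exact LinearMap.det_id

theorem det_fderiv_mul_det_fderiv_of_semiconj (hsc : Semiconj h φ ψ)
    (hhφ : DifferentiableAt 𝕜 h (φ x)) (hφ : DifferentiableAt 𝕜 φ x)
    (hψh : DifferentiableAt 𝕜 ψ (h x)) (hh : DifferentiableAt 𝕜 h x) :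
    (fderiv 𝕜 h (φ x)).det * (fderiv 𝕜 φ x).det = (fderiv 𝕜 ψ (h x)).det * (fderiv 𝕜 h x).det := by
  rw [← det_fderiv_comp hhφ hφ, ← det_fderiv_comp hψh hh, hsc.comp_eq]

end

section

variable {E : Type*} [NormedAddCommGroup E] [NormedSpace ℝ E] {φ ψ h : E → E} {x : E}

theorem abs_det_fderiv_eq_one_of_semiconj_of_leftInverse (hψφ : LeftInverse ψ φ)
    (hsc : Semiconj h φ ψ) (hφx : φ x = x) (hhx : h x = x) (hdet : |(fderiv ℝ h x).det| = 1)
    (hφ : DifferentiableAt ℝ φ x) (hψ : DifferentiableAt ℝ ψ x) (hh : DifferentiableAt ℝ h x) :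
    |(fderiv ℝ φ x).det| = 1 := by
  have hinv := det_fderiv_mul_det_fderiv_of_leftInverse hψφ (by rwa [hφx]) hφ
  have hconj := det_fderiv_mul_det_fderiv_of_semiconj hsc (by rwa [hφx]) hφ (by rwa [hhx]) hh
  rw [hφx] at hinv hconj
  rw [hhx] at hconj
  have habs : |(fderiv ℝ φ x).det| = |(fderiv ℝ ψ x).det| := by
    simpa [abs_mul, hdet] using congrArg abs hconj
  have hsq : |(fderiv ℝ φ x).det| * |(fderiv ℝ φ x).det| = 1 := by
    calc |(fderiv ℝ φ x).det| * |(fderiv ℝ φ x).det|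
        = |(fderiv ℝ ψ x).det * (fderiv ℝ φ x).det| := by rw [abs_mul, habs]
      _ = 1 := by rw [hinv, abs_one]
  nlinarith [abs_nonneg (fderiv ℝ φ x).det]

end

theorem stmt4_general (f g h : ℝ × ℝ → ℝ × ℝ)
    (hf : ContDiff ℝ 1 f) (hg : ContDiff ℝ 1 g) (hh : ContDiff ℝ 1 h)
    (hgf : Function.LeftInverse g f)
    (hdet : ∀ y, |(fderiv ℝ h y).det| = 1)
    (hrev : h ∘ f = g ∘ h)
    (n : ℕ)
    (x : ℝ × ℝ) (hx : f^[n] x = x) (hhx : h x = x) :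
    |(fderiv ℝ (f^[n]) x).det| = 1 :=
  abs_det_fderiv_eq_one_of_semiconj_of_leftInverse (hgf.iterate n)
    ((semiconj_iff_comp_eq.mpr hrev).iterate_right n) hx hhx (hdet x)
    ((hf.differentiable one_ne_zero).iterate n x) ((hg.differentiable one_ne_zero).iterate n x)
    ((hh.differentiable one_ne_zero) x)

/-- For an `h`-reversible C¹ diffeomorphism `f` of `ℝ²` with
`|det Dh| ≡ 1`, every periodic point `x` of period `n ≥ 1` lying on `Fix(h)`
has `|det D(f^[n])(x)| = 1`. -/
theorem stmt4 (f g h : ℝ × ℝ → ℝ × ℝ)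
    (hf : ContDiff ℝ 1 f) (hg : ContDiff ℝ 1 g) (hh : ContDiff ℝ 1 h)
    (hgf : Function.LeftInverse g f) (hfg : Function.RightInverse g f)
    (hinv : ∀ y, h (h y) = y)
    (hdet : ∀ y, |(fderiv ℝ h y).det| = 1)
    (hrev : h ∘ f = g ∘ h)
    (n : ℕ) (hn : 1 ≤ n)
    (x : ℝ × ℝ) (hx : f^[n] x = x) (hhx : h x = x) :
    |(fderiv ℝ (f^[n]) x).det| = 1 :=
  stmt4_general f g h hf hg hh hgf hdet hrev n x hx hhx
end

section
/- The vector field of the two-vortex system X(R, S, φ) = ( (1/2) A R sin 2φ − ε sin φ sin S sin(R sin φ), −1 + ε cos S cos(R sin φ), κ/R² + A cos²φ − (ε/R) cos φ sin S sin(R sin φ) ) is reversible under the involution H₁ : (R, S, φ, t) ↦ (R, −S, −φ, −t); that is, if G(R,S,φ) = (R, −S, −φ) then DG(X(p)) = −X(G(p)) for all p with R ≠ 0. -/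
open Real

/-- The two-vortex vector field is reversible under the involution
`G : (R, S, φ) ↦ (R, −S, −φ)`: `G(X(p)) = −X(G(p))` for `R ≠ 0`. -/
theorem stmt9 (A ε κ : ℝ) (X G : ℝ × ℝ × ℝ → ℝ × ℝ × ℝ)
    (hX : ∀ R S φ : ℝ, X (R, S, φ) =
      ((1/2) * A * R * sin (2*φ) - ε * sin φ * sin S * sin (R * sin φ),
       -1 + ε * cos S * cos (R * sin φ),
       κ / R^2 + A * (cos φ)^2 - (ε / R) * cos φ * sin S * sin (R * sin φ)))
    (hG : ∀ R S φ : ℝ, G (R, S, φ) = (R, -S, -φ)) :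
    ∀ p : ℝ × ℝ × ℝ, p.1 ≠ 0 → G (X p) = - X (G p) := by
  rintro ⟨R, S, φ⟩ -
  -- `sin` is odd, `cos` is even and `R sin φ` is odd in `φ`: the first component of `X` is odd
  -- and the other two are even under `(S, φ) ↦ (-S, -φ)`.
  simp only [hX, hG, Prod.neg_mk, mul_neg, sin_neg, cos_neg, neg_mul, neg_neg]
  ext <;> ring
end

section
/- For ε = 0, the two-vortex system reduces to Ṙ = (1/2) A R sin 2φ, Ṡ = −1, φ̇ = κ/R² + A cos²φ, and along solutions of this system the derivative of E(R,φ) = κ ln R + (A R²/4)(1+cos 2φ) equals (1/2) A sin 2φ (κ + A R² cos²φ) − (κ + A R² cos²φ) · (A/2) sin 2φ = 0, i.e., E is a first integral of the (R, φ) subsystem. -/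
open Real

/-- For `ε = 0` the quantity `E(R, φ) = κ ln R + (A R²/4)(1 + cos 2φ)` is a
first integral of the subsystem `Ṙ = (1/2) A R sin 2φ, φ̇ = κ/R² + A cos²φ`. -/
theorem stmt11 (A κ : ℝ) (R φ : ℝ → ℝ) (hR : ∀ t, 0 < R t)
    (hdR : ∀ t, HasDerivAt R ((1/2) * A * R t * sin (2 * φ t)) t)
    (hdφ : ∀ t, HasDerivAt φ (κ / (R t)^2 + A * (cos (φ t))^2) t) :
    ∀ t s : ℝ,
      κ * log (R t) + (A * (R t)^2 / 4) * (1 + cos (2 * φ t)) =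
      κ * log (R s) + (A * (R s)^2 / 4) * (1 + cos (2 * φ s)) := by
  set E : ℝ → ℝ := fun t => κ * log (R t) + (A * (R t)^2 / 4) * (1 + cos (2 * φ t)) with hE
  have key : ∀ t, HasDerivAt E 0 t := by
    intro t
    have hRne : R t ≠ 0 := (hR t).ne'
    have h1 : HasDerivAt (fun t => log (R t))
        ((1/2) * A * R t * sin (2 * φ t) / R t) t := (hdR t).log hRne
    have h2 : HasDerivAt (fun t => (R t)^2)
        (2 * R t * ((1/2) * A * R t * sin (2 * φ t))) t := by
      simpa using (hdR t).fun_pow 2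
    have h3 : HasDerivAt (fun t => 2 * φ t)
        (2 * (κ / (R t)^2 + A * (cos (φ t))^2)) t := (hdφ t).const_mul 2
    have h4 : HasDerivAt (fun t => cos (2 * φ t))
        (-sin (2 * φ t) * (2 * (κ / (R t)^2 + A * (cos (φ t))^2))) t := h3.cos
    have h5 : HasDerivAt E
        (κ * ((1/2) * A * R t * sin (2 * φ t) / R t)
          + ((A * (2 * R t * ((1/2) * A * R t * sin (2 * φ t))) / 4) * (1 + cos (2 * φ t))
            + (A * (R t)^2 / 4) * (-sin (2 * φ t) * (2 * (κ / (R t)^2 + A * (cos (φ t))^2))))) t := by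
      exact (h1.const_mul κ).add
        (((h2.const_mul A).div_const 4).mul (h4.const_add 1))
    convert h5 using 1
    have hc : cos (2 * φ t) = 2 * (cos (φ t))^2 - 1 := by
      rw [Real.cos_two_mul]
    rw [hc]
    field_simp
    ring
  intro t s
  exact is_const_of_deriv_eq_zero (fun x => (key x).differentiableAt)
    (fun x => (key x).deriv) t s
end
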